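/- Let n be a prime dividing N, and let V be a k-dimensional F_q-subspace of F_{q^N} with P_V(x) = x^{q^k} + alpha_1 x^q + alpha_0 x where alpha_0, alpha_1 in F_{q^n}^* and alpha_1^{(q^k-1)/(q-1)} / alpha_0^{(q^k-q)/(q-1)} is not in F_q. Then the code C = union over i=0..n-1 of {alpha F^i(V) : alpha in F_{q^N}^*} has size n*(q^N - 1)/(q - 1) and any two distinct codewords intersect in a subspace of dimension at most 1. -/

import Mathlib

open Pointwise

open Polynomial

noncomputable def subspacePoly {F : Type*} [Field F] [Fintype F] (V : Set F) : F[X] :=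
  ∏ v ∈ V.toFinite.toFinset, (X - C v)

def orbitCodeF (q n : ℕ) {Fq F : Type*} [Field Fq] [Field F] [Algebra Fq F]
    (V : Submodule Fq F) : Set (Submodule Fq F) :=
  {W | ∃ i < n, ∃ α : F, α ≠ 0 ∧
    (W : Set F) = α • ((fun x : F => x ^ q ^ i) '' (V : Set F))}

/-!
Put `q = |F_q|`. The hypothesis on `P_V` says that `V` is the zero set of
`x^{q^k} + a₁ x^q + a₀ x`, so `α F^i(V)` is the zero set of `x^{q^k} + c₁ x^q + c₀ x` with
`(c₁, c₀) = (α^{q^k-q} a₁^{q^i}, α^{q^k-1} a₀^{q^i})`. Two such zero sets with different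
coefficient pairs meet inside the roots of a nonzero polynomial of degree at most `q`, hence in a
subspace of dimension at most one; as `|V| = q^k > q`, a codeword also determines its pair.

With `w = α^{q-1}` and `E = (q^k-q)/(q-1)` the pair is `(w^E a₁^{q^i}, w^{E+1} a₀^{q^i})`, so
`c₁^{E+1}/c₀^E = r^{q^i}` with `r = a₁^{E+1}/a₀^E`, independently of `α`. Since `r` lies in
`F_{q^n}` but not in `F_q` and `n` is prime, its Frobenius orbit has length `n`; hence the pair
determines `i < n`, and then `w`. The codewords are thus indexed by `Fin n × F^*/μ_{q-1}`.
-/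

open Function

section SubspacePoly

variable {F : Type*} [Field F] [Fintype F]

theorem eval_subspacePoly_eq_zero_iff (S : Set F) (x : F) :
    (subspacePoly S).eval x = 0 ↔ x ∈ S := by
  simp [subspacePoly, eval_prod, Finset.prod_eq_zero_iff, sub_eq_zero]

theorem monic_subspacePoly (S : Set F) : (subspacePoly S).Monic :=
  monic_prod_of_monic _ _ fun v _ => monic_X_sub_C v

theorem natDegree_subspacePoly (S : Set F) : (subspacePoly S).natDegree = S.ncard := by
  rw [subspacePoly, natDegree_prod _ _ fun v _ => X_sub_C_ne_zero v,
    Set.ncard_eq_toFinset_card S]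
  simp

end SubspacePoly

theorem two_le_of_monic_trinomial {F : Type*} [Field F] {q k : ℕ} {a₁ a₀ : F} (hq : 2 ≤ q)
    (ha₁ : a₁ ≠ 0) (hmonic : (X ^ q ^ k + C a₁ * X ^ q + C a₀ * X : F[X]).Monic)
    (hdeg : (X ^ q ^ k + C a₁ * X ^ q + C a₀ * X : F[X]).natDegree = q ^ k) : 2 ≤ k := by
  by_contra! hk
  have hq1 : q ≠ 1 := by omega
  interval_cases k
  · have := coeff_eq_zero_of_natDegree_lt (n := q) (by rw [hdeg, pow_zero]; omega)
    simp [coeff_X, hq1.symm] at this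
    exact ha₁ this
  · have := hmonic.coeff_natDegree
    rw [hdeg, pow_one] at this
    simp [coeff_X, hq1.symm] at this
    exact ha₁ this

section TrinomialZeros

variable {F : Type*} [Field F]

def trinomialZeros (m e : ℕ) (c₁ c₀ : F) : Set F := {x | x ^ m + c₁ * x ^ e + c₀ * x = 0}

theorem mem_trinomialZeros {m e : ℕ} {c₁ c₀ x : F} :
    x ∈ trinomialZeros m e c₁ c₀ ↔ x ^ m + c₁ * x ^ e + c₀ * x = 0 := Iff.rfl

theorem coe_eq_trinomialZeros_of_subspacePoly_eq [Fintype F] {S : Set F} {m e : ℕ} {a₁ a₀ : F}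
    (hS : subspacePoly S = X ^ m + C a₁ * X ^ e + C a₀ * X) :
    S = trinomialZeros m e a₁ a₀ := by
  ext x
  rw [← eval_subspacePoly_eq_zero_iff, hS, mem_trinomialZeros]
  simp

theorem smul_trinomialZeros {m e : ℕ} (he : e ≤ m) (hm : 1 ≤ m) {α : F} (hα : α ≠ 0)
    (c₁ c₀ : F) :
    α • trinomialZeros m e c₁ c₀ =
      trinomialZeros m e (α ^ (m - e) * c₁) (α ^ (m - 1) * c₀) := by
  ext x
  have hαe : α ^ m * α⁻¹ ^ e = α ^ (m - e) := by
    rw [← pow_sub_mul_pow α he, mul_assoc, ← mul_pow, mul_inv_cancel₀ hα, one_pow, mul_one]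
  have hα1 : α ^ m * α⁻¹ = α ^ (m - 1) := by
    rw [← pow_sub_mul_pow α hm, pow_one, mul_assoc, mul_inv_cancel₀ hα, mul_one]
  have hscale : α ^ m * ((α⁻¹ * x) ^ m + c₁ * (α⁻¹ * x) ^ e + c₀ * (α⁻¹ * x)) =
      x ^ m + α ^ (m - e) * c₁ * x ^ e + α ^ (m - 1) * c₀ * x := by
    have hαm : α ^ m * α⁻¹ ^ m = 1 := by rw [← mul_pow, mul_inv_cancel₀ hα, one_pow]
    rw [← hαe, ← hα1]
    linear_combination x ^ m * hαm
  rw [Set.mem_smul_set_iff_inv_smul_mem₀ hα, smul_eq_mul, mem_trinomialZeros, mem_trinomialZeros,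
    ← hscale, mul_eq_zero, or_iff_right (pow_ne_zero _ hα)]

theorem image_trinomialZeros {E : Type*} [EquivLike E F F] [RingEquivClass E F F] (σ : E)
    (m e : ℕ) (c₁ c₀ : F) :
    σ '' trinomialZeros m e c₁ c₀ = trinomialZeros m e (σ c₁) (σ c₀) := by
  ext x
  obtain ⟨y, rfl⟩ := EquivLike.surjective σ x
  rw [(EquivLike.injective σ).mem_set_image, mem_trinomialZeros, mem_trinomialZeros,
    ← map_pow, ← map_pow, ← map_mul, ← map_mul, ← map_add, ← map_add,
    map_eq_zero_iff σ (EquivLike.injective σ)]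

theorem ncard_inter_trinomialZeros_le {m e : ℕ} (he : 2 ≤ e) {c₁ c₀ d₁ d₀ : F}
    (hcd : (c₁, c₀) ≠ (d₁, d₀)) :
    (trinomialZeros m e c₁ c₀ ∩ trinomialZeros m e d₁ d₀).ncard ≤ e := by
  classical
  set p : F[X] := C (c₁ - d₁) * X ^ e + C (c₀ - d₀) * X
  have hp : p ≠ 0 := by
    have he1 : e ≠ 1 := by omega
    intro h
    have h₁ : p.coeff e = c₁ - d₁ := by simp [p, coeff_C_mul, -map_sub, coeff_X, he1.symm]
    have h₀ : p.coeff 1 = c₀ - d₀ := by simp [p, coeff_C_mul, -map_sub, coeff_X_pow, he1.symm]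
    rw [h, coeff_zero, eq_comm, sub_eq_zero] at h₁ h₀
    exact hcd (by rw [h₁, h₀])
  have hsub : trinomialZeros m e c₁ c₀ ∩ trinomialZeros m e d₁ d₀ ⊆
      (p.roots.toFinset : Set F) := by
    rintro x ⟨hc, hd⟩
    rw [Finset.mem_coe, Multiset.mem_toFinset, mem_roots hp, IsRoot.def]
    simp only [p, eval_add, eval_mul, eval_C, eval_pow, eval_X]
    linear_combination mem_trinomialZeros.mp hc - mem_trinomialZeros.mp hd
  calc _ ≤ (p.roots.toFinset : Set F).ncard := Set.ncard_le_ncard hsub (Finset.finite_toSet _)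
    _ ≤ p.natDegree := by
      rw [Set.ncard_coe_finset]
      exact (Multiset.toFinset_card_le _).trans (card_roots' p)
    _ ≤ e := by
      unfold p
      compute_degree
      omega

theorem eq_of_trinomialZeros_eq {m e : ℕ} (he : 2 ≤ e) {c₁ c₀ d₁ d₀ : F}
    (hcard : e < (trinomialZeros m e c₁ c₀).ncard)
    (h : trinomialZeros m e c₁ c₀ = trinomialZeros m e d₁ d₀) :
    c₁ = d₁ ∧ c₀ = d₀ := by
  by_contra hne
  have := ncard_inter_trinomialZeros_le (m := m) he (mt Prod.mk.inj hne)
  rw [← h, Set.inter_self] at this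
  omega

end TrinomialZeros

section ScalingInvariant

variable {F : Type*} [Field F]

theorem div_pow_eq_div_pow_of_scaled_eq {e : ℕ} {w w' x₁ x₀ y₁ y₀ : F} (hw : w ≠ 0)
    (hx₀ : x₀ ≠ 0) (hy₀ : y₀ ≠ 0) (h₁ : w ^ e * x₁ = w' ^ e * y₁)
    (h₀ : w ^ (e + 1) * x₀ = w' ^ (e + 1) * y₀) :
    x₁ ^ (e + 1) / x₀ ^ e = y₁ ^ (e + 1) / y₀ ^ e := by
  rw [div_eq_div_iff (pow_ne_zero _ hx₀) (pow_ne_zero _ hy₀)]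
  apply mul_left_cancel₀ (pow_ne_zero (e * (e + 1)) hw)
  linear_combination
    y₀ ^ e * congrArg (· ^ (e + 1)) h₁ - y₁ ^ (e + 1) * congrArg (· ^ e) h₀

theorem scaled_pow_pair_eq_iff {q n E i j : ℕ} [Fact n.Prime] {a₁ a₀ w w' : F}
    (ha₁ : a₁ ≠ 0) (ha₀ : a₀ ≠ 0) (hw : w ≠ 0) (hw' : w' ≠ 0)
    (hper : (a₁ ^ (E + 1) / a₀ ^ E) ^ q ^ n = a₁ ^ (E + 1) / a₀ ^ E)
    (hfix : (a₁ ^ (E + 1) / a₀ ^ E) ^ q ≠ a₁ ^ (E + 1) / a₀ ^ E)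
    (hi : i < n) (hj : j < n) :
    (w ^ E * a₁ ^ q ^ i = w' ^ E * a₁ ^ q ^ j ∧
        w ^ (E + 1) * a₀ ^ q ^ i = w' ^ (E + 1) * a₀ ^ q ^ j) ↔ i = j ∧ w = w' := by
  constructor
  · rintro ⟨h₁, h₀⟩
    have hinv :=
      div_pow_eq_div_pow_of_scaled_eq hw (pow_ne_zero _ ha₀) (pow_ne_zero _ ha₀) h₁ h₀
    have hfrob (l : ℕ) : (a₁ ^ q ^ l) ^ (E + 1) / (a₀ ^ q ^ l) ^ E =
        (a₁ ^ (E + 1) / a₀ ^ E) ^ q ^ l := by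
      rw [div_pow, pow_right_comm, pow_right_comm a₀]
    rw [hfrob, hfrob] at hinv
    have hperiod : minimalPeriod (· ^ q) (a₁ ^ (E + 1) / a₀ ^ E) = n := by
      refine minimalPeriod_eq_prime ?_ hfix
      rwa [IsPeriodicPt, IsFixedPt, pow_iterate]
    have hij : i = j := by
      refine iterate_injOn_Iio_minimalPeriod (f := (· ^ q)) (hperiod ▸ hi) (hperiod ▸ hj) ?_
      simpa only [pow_iterate] using hinv
    subst hij
    refine ⟨rfl, ?_⟩
    have hE₀ := mul_right_cancel₀ (pow_ne_zero _ ha₀) h₀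
    rw [pow_succ, pow_succ, mul_right_cancel₀ (pow_ne_zero _ ha₁) h₁] at hE₀
    exact mul_left_cancel₀ (pow_ne_zero _ hw') hE₀
  · rintro ⟨rfl, rfl⟩
    exact ⟨rfl, rfl⟩

end ScalingInvariant

theorem Nat.sub_one_dvd_pow_sub_self {q : ℕ} (hq : 1 ≤ q) (k : ℕ) : q - 1 ∣ q ^ k - q := by
  have h := Nat.dvd_sub (by simpa using Nat.sub_dvd_pow_sub_pow q 1 k) (dvd_refl (q - 1))
  rwa [show q ^ k - 1 - (q - 1) = q ^ k - q by omega] at h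

theorem Nat.pow_sub_self_div_add_one {q k : ℕ} (hq : 2 ≤ q) (hk : k ≠ 0) :
    (q ^ k - q) / (q - 1) + 1 = (q ^ k - 1) / (q - 1) := by
  have : q ≤ q ^ k := Nat.le_self_pow hk q
  rw [← Nat.add_div_right _ (by omega : 0 < q - 1)]
  congr 1
  omega

theorem Set.natCard_range_eq_of_forall_eq_iff {α β γ : Type*} {f : α → β} {g : α → γ}
    (h : ∀ x y, f x = f y ↔ g x = g y) : Nat.card (Set.range f) = Nat.card (Set.range g) := by
  have hker : Setoid.ker f = Setoid.ker g := Setoid.ext fun x y => h x y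
  rw [← Nat.card_congr (Setoid.quotientKerEquivRange f),
    ← Nat.card_congr (Setoid.quotientKerEquivRange g), hker]

theorem natCard_rootsOfUnity_card_sub_one (Fq F : Type*) [Field Fq] [Fintype Fq] [Field F]
    [Algebra Fq F] : Nat.card (rootsOfUnity (Fintype.card Fq - 1) F) = Fintype.card Fq - 1 := by
  classical
  have : NeZero (Fintype.card Fq - 1) := ⟨by have := Fintype.one_lt_card (α := Fq); omega⟩
  refine le_antisymm (card_rootsOfUnity F _) ?_
  let ι : Fqˣ → rootsOfUnity (Fintype.card Fq - 1) F := fun u =>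
    ⟨Units.map (algebraMap Fq F : Fq →* F) u, by
      rw [mem_rootsOfUnity, ← map_pow, ← Fintype.card_units, pow_card_eq_one, map_one]⟩
  have hι : Injective ι := fun u v h =>
    Units.map_injective (algebraMap Fq F).injective (congrArg Subtype.val h)
  have h := Nat.card_le_card_of_injective ι hι
  rwa [Nat.card_units, Nat.card_eq_fintype_card] at h

section OrbitCode

variable {Fq F : Type*} [Field Fq] [Fintype Fq] [Field F] [Finite F] [Algebra Fq F]

local notation "q" => Fintype.card Fq

local notation "Frob" => FiniteField.frobeniusAlgEquivOfAlgebraic Fq F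

theorem frobeniusAlgEquivOfAlgebraic_pow_apply (i : ℕ) (x : F) : (Frob ^ i) x = x ^ q ^ i := by
  rw [AlgEquiv.coe_pow, FiniteField.coe_frobeniusAlgEquivOfAlgebraic_iterate]

theorem ncard_coe_submodule_eq_pow_finrank (V : Submodule Fq F) :
    (V : Set F).ncard = q ^ Module.finrank Fq V := by
  rw [← Nat.card_coe_set_eq, SetLike.coe_sort_coe, Module.natCard_eq_pow_finrank (K := Fq),
    Nat.card_eq_fintype_card]

noncomputable def scaledFrobeniusImage (V : Submodule Fq F) (i : ℕ) (α : F) : Submodule Fq F :=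
  V.map (LinearMap.mulLeft Fq α ∘ₗ (Frob ^ i).toLinearMap)

theorem coe_scaledFrobeniusImage (V : Submodule Fq F) (i : ℕ) (α : F) :
    (scaledFrobeniusImage V i α : Set F) = α • ((fun x : F => x ^ q ^ i) '' V) := by
  rw [scaledFrobeniusImage, Submodule.map_coe, ← Set.image_smul, Set.image_image]
  congr 1
  funext x
  exact congrArg (α * ·) (frobeniusAlgEquivOfAlgebraic_pow_apply i x)

theorem ncard_scaledFrobeniusImage (V : Submodule Fq F) (i : ℕ) {α : F} (hα : α ≠ 0) :
    (scaledFrobeniusImage V i α : Set F).ncard = (V : Set F).ncard := by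
  have hinj : Injective (LinearMap.mulLeft Fq α ∘ₗ (Frob ^ i).toLinearMap) :=
    (mul_right_injective₀ hα).comp (Frob ^ i).injective
  rw [scaledFrobeniusImage, Submodule.map_coe, Set.ncard_image_of_injective _ hinj]

theorem orbitCodeF_eq_range (V : Submodule Fq F) (n : ℕ) :
    orbitCodeF q n V = Set.range fun z : Fin n × Fˣ => scaledFrobeniusImage V z.1 z.2 := by
  ext W
  simp only [orbitCodeF, Set.mem_ofPred_eq, Set.mem_range, Prod.exists,
    ← coe_scaledFrobeniusImage, SetLike.coe_set_eq]
  constructor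
  · rintro ⟨i, hi, α, hα, rfl⟩
    exact ⟨⟨i, hi⟩, Units.mk0 α hα, rfl⟩
  · rintro ⟨i, u, rfl⟩
    exact ⟨i, i.2, u, u.ne_zero, rfl⟩

theorem smul_image_pow_trinomialZeros {k : ℕ} (hk : k ≠ 0) {α : F} (hα : α ≠ 0) (i : ℕ)
    (a₁ a₀ : F) :
    α • ((fun x : F => x ^ q ^ i) '' trinomialZeros (q ^ k) q a₁ a₀) =
      trinomialZeros (q ^ k) q (α ^ (q ^ k - q) * a₁ ^ q ^ i)
        (α ^ (q ^ k - 1) * a₀ ^ q ^ i) := by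
  have hfrob : (fun x : F => x ^ q ^ i) = ⇑(Frob ^ i) :=
    funext fun x => (frobeniusAlgEquivOfAlgebraic_pow_apply i x).symm
  rw [hfrob, image_trinomialZeros, smul_trinomialZeros (Nat.le_self_pow hk _)
    (Nat.one_le_pow _ _ Fintype.card_pos) hα, frobeniusAlgEquivOfAlgebraic_pow_apply,
    frobeniusAlgEquivOfAlgebraic_pow_apply]

theorem finrank_inf_le_one_of_coe_eq_trinomialZeros {m : ℕ} {c₁ c₀ d₁ d₀ : F}
    {U W : Submodule Fq F} (hUW : U ≠ W) (hU : (U : Set F) = trinomialZeros m q c₁ c₀)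
    (hW : (W : Set F) = trinomialZeros m q d₁ d₀) :
    Module.finrank Fq ↥(U ⊓ W) ≤ 1 := by
  have hq : 2 ≤ q := Fintype.one_lt_card
  have hcd : (c₁, c₀) ≠ (d₁, d₀) := by
    rintro ⟨⟩
    exact hUW (SetLike.coe_injective (hU.trans hW.symm))
  have hcard := ncard_inter_trinomialZeros_le (m := m) hq hcd
  rw [← hU, ← hW, ← Submodule.coe_inf, ncard_coe_submodule_eq_pow_finrank] at hcard
  exact (Nat.pow_le_pow_iff_right hq).mp (by simpa using hcard)

theorem finrank_inf_le_one_of_mem_orbitCodeF {n k : ℕ} (hk : k ≠ 0) {V : Submodule Fq F}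
    {a₁ a₀ : F} (hV : (V : Set F) = trinomialZeros (q ^ k) q a₁ a₀) {U W : Submodule Fq F}
    (hU : U ∈ orbitCodeF q n V) (hW : W ∈ orbitCodeF q n V) (hUW : U ≠ W) :
    Module.finrank Fq ↥(U ⊓ W) ≤ 1 := by
  obtain ⟨i, -, α, hα, hU⟩ := hU
  obtain ⟨j, -, β, hβ, hW⟩ := hW
  rw [hV, smul_image_pow_trinomialZeros hk hα] at hU
  rw [hV, smul_image_pow_trinomialZeros hk hβ] at hW
  exact finrank_inf_le_one_of_coe_eq_trinomialZeros hUW hU hW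

theorem natCard_units_quotient_rootsOfUnity :
    Nat.card (Fˣ ⧸ rootsOfUnity (q - 1) F) = (q ^ Module.finrank Fq F - 1) / (q - 1) := by
  have h := Subgroup.card_eq_card_quotient_mul_card_subgroup (rootsOfUnity (q - 1) F)
  rw [natCard_rootsOfUnity_card_sub_one, Nat.card_units, Module.natCard_eq_pow_finrank (K := Fq),
    Nat.card_eq_fintype_card] at h
  rw [h, Nat.mul_div_cancel _ (by have := Fintype.one_lt_card (α := Fq); omega)]

theorem scaledFrobeniusImage_eq_iff {V : Submodule Fq F} {k : ℕ} {a₁ a₀ : F}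
    (hV : (V : Set F) = trinomialZeros (q ^ k) q a₁ a₀) (hkV : Module.finrank Fq V = k)
    (hk : 2 ≤ k) {α β : F} (hα : α ≠ 0) (hβ : β ≠ 0) (i j : ℕ) :
    scaledFrobeniusImage V i α = scaledFrobeniusImage V j β ↔
      α ^ (q ^ k - q) * a₁ ^ q ^ i = β ^ (q ^ k - q) * a₁ ^ q ^ j ∧
        α ^ (q ^ k - 1) * a₀ ^ q ^ i = β ^ (q ^ k - 1) * a₀ ^ q ^ j := by
  have hcoe {γ : F} (hγ : γ ≠ 0) (l : ℕ) : (scaledFrobeniusImage V l γ : Set F) =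
      trinomialZeros (q ^ k) q (γ ^ (q ^ k - q) * a₁ ^ q ^ l)
        (γ ^ (q ^ k - 1) * a₀ ^ q ^ l) := by
    rw [coe_scaledFrobeniusImage V l γ, hV]
    exact smul_image_pow_trinomialZeros (by omega) hγ l a₁ a₀
  have hq : 2 ≤ q := Fintype.one_lt_card
  rw [← SetLike.coe_set_eq, hcoe hα, hcoe hβ]
  refine ⟨eq_of_trinomialZeros_eq hq ?_, fun ⟨h₁, h₀⟩ => by rw [h₁, h₀]⟩
  rw [← hcoe hα i, ncard_scaledFrobeniusImage V i hα, ncard_coe_submodule_eq_pow_finrank, hkV]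
  exact lt_of_eq_of_lt (pow_one _).symm (Nat.pow_lt_pow_right hq hk)

theorem ncard_orbitCodeF {n k : ℕ} (hn : n.Prime) {V : Submodule Fq F} {a₁ a₀ : F}
    (hV : (V : Set F) = trinomialZeros (q ^ k) q a₁ a₀) (hkV : Module.finrank Fq V = k)
    (hk : 2 ≤ k) (ha₁ : a₁ ≠ 0) (ha₀ : a₀ ≠ 0)
    (ha₁n : a₁ ^ q ^ n = a₁) (ha₀n : a₀ ^ q ^ n = a₀)
    (hfix : (a₁ ^ ((q ^ k - 1) / (q - 1)) / a₀ ^ ((q ^ k - q) / (q - 1))) ^ q ≠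
      a₁ ^ ((q ^ k - 1) / (q - 1)) / a₀ ^ ((q ^ k - q) / (q - 1))) :
    (orbitCodeF q n V).ncard = n * ((q ^ Module.finrank Fq F - 1) / (q - 1)) := by
  have : Fact n.Prime := ⟨hn⟩
  have hq : 2 ≤ q := Fintype.one_lt_card
  set E := (q ^ k - q) / (q - 1)
  rw [← Nat.pow_sub_self_div_add_one hq (by omega)] at hfix
  have hper : (a₁ ^ (E + 1) / a₀ ^ E) ^ q ^ n = a₁ ^ (E + 1) / a₀ ^ E := by
    rw [div_pow, pow_right_comm, ha₁n, pow_right_comm, ha₀n]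
  have hpow₀ (u : Fˣ) : (u : F) ^ (q ^ k - q) = ((u : F) ^ (q - 1)) ^ E := by
    rw [← pow_mul, Nat.mul_div_cancel' (Nat.sub_one_dvd_pow_sub_self (by omega) k)]
  have hpow₁ (u : Fˣ) : (u : F) ^ (q ^ k - 1) = ((u : F) ^ (q - 1)) ^ (E + 1) := by
    rw [← pow_mul, Nat.pow_sub_self_div_add_one hq (by omega),
      Nat.mul_div_cancel' (by simpa using Nat.sub_dvd_pow_sub_pow q 1 k)]
  have hmk (u v : Fˣ) : (u : Fˣ ⧸ rootsOfUnity (q - 1) F) = v ↔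
      (u : F) ^ (q - 1) = (v : F) ^ (q - 1) := by
    rw [QuotientGroup.eq, mem_rootsOfUnity, mul_pow, inv_pow, inv_mul_eq_one, Units.ext_iff,
      Units.val_pow_eq_pow_val, Units.val_pow_eq_pow_val]
  let g : Fin n × Fˣ → Fin n × (Fˣ ⧸ rootsOfUnity (q - 1) F) := Prod.map id QuotientGroup.mk
  have key (z z' : Fin n × Fˣ) :
      scaledFrobeniusImage V z.1 z.2 = scaledFrobeniusImage V z'.1 z'.2 ↔ g z = g z' := by
    obtain ⟨⟨i, hi⟩, u⟩ := z
    obtain ⟨⟨j, hj⟩, v⟩ := z'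
    rw [scaledFrobeniusImage_eq_iff hV hkV hk u.ne_zero v.ne_zero,
      hpow₀, hpow₀, hpow₁, hpow₁,
      scaled_pow_pair_eq_iff ha₁ ha₀ (pow_ne_zero _ u.ne_zero) (pow_ne_zero _ v.ne_zero)
        hper hfix hi hj]
    simp only [g, Prod.map_apply, id, Prod.mk.injEq, Fin.mk.injEq, hmk]
  have hg : Surjective g := surjective_id.prodMap QuotientGroup.mk_surjective
  rw [orbitCodeF_eq_range, ← Nat.card_coe_set_eq, Set.natCard_range_eq_of_forall_eq_iff key,
    hg.range_eq, Nat.card_univ, Nat.card_prod, Nat.card_fin, natCard_units_quotient_rootsOfUnity]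

end OrbitCode

theorem stmt13_general (q n N k : ℕ) (hn : n.Prime)
    (Fq F : Type*) [Field Fq] [Fintype Fq] [Field F] [Fintype F] [Algebra Fq F]
    (hq : Fintype.card Fq = q) (hN : Module.finrank Fq F = N)
    (V : Submodule Fq F) (hkV : Module.finrank Fq V = k)
    (a0 a1 : F) (ha0 : a0 ≠ 0) (ha1 : a1 ≠ 0)
    (ha0n : a0 ^ q ^ n = a0) (ha1n : a1 ^ q ^ n = a1)
    (hneq : (a1 ^ ((q ^ k - 1) / (q - 1)) / a0 ^ ((q ^ k - q) / (q - 1))) ^ q ≠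
            a1 ^ ((q ^ k - 1) / (q - 1)) / a0 ^ ((q ^ k - q) / (q - 1)))
    (hP : subspacePoly (V : Set F) = X ^ q ^ k + C a1 * X ^ q + C a0 * X) :
    Set.ncard (orbitCodeF q n V) = n * ((q ^ N - 1) / (q - 1)) ∧
    ∀ U ∈ orbitCodeF q n V, ∀ W ∈ orbitCodeF q n V,
      U ≠ W → Module.finrank Fq ↥(U ⊓ W) ≤ 1 := by
  subst hq hN
  have hV := coe_eq_trinomialZeros_of_subspacePoly_eq hP
  have hk : 2 ≤ k := two_le_of_monic_trinomial Fintype.one_lt_card ha1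
    (hP ▸ monic_subspacePoly _)
    (by rw [← hP, natDegree_subspacePoly, ncard_coe_submodule_eq_pow_finrank, hkV])
  exact ⟨ncard_orbitCodeF hn hV hkV hk ha1 ha0 ha1n ha0n hneq,
    fun U hU W hW => finrank_inf_le_one_of_mem_orbitCodeF (by omega) hV hU hW⟩

theorem stmt13 (q n N k : ℕ) (hn : n.Prime) (hnN : n ∣ N)
    (Fq F : Type*) [Field Fq] [Fintype Fq] [Field F] [Fintype F] [Algebra Fq F]
    (hq : Fintype.card Fq = q) (hN : Module.finrank Fq F = N)
    (V : Submodule Fq F) (hkV : Module.finrank Fq V = k)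
    (a0 a1 : F) (ha0 : a0 ≠ 0) (ha1 : a1 ≠ 0)
    (ha0n : a0 ^ q ^ n = a0) (ha1n : a1 ^ q ^ n = a1)
    (hneq : (a1 ^ ((q ^ k - 1) / (q - 1)) / a0 ^ ((q ^ k - q) / (q - 1))) ^ q ≠
            a1 ^ ((q ^ k - 1) / (q - 1)) / a0 ^ ((q ^ k - q) / (q - 1)))
    (hP : subspacePoly (V : Set F) = X ^ q ^ k + C a1 * X ^ q + C a0 * X) :
    Set.ncard (orbitCodeF q n V) = n * ((q ^ N - 1) / (q - 1)) ∧
    ∀ U ∈ orbitCodeF q n V, ∀ W ∈ orbitCodeF q n V,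
      U ≠ W → Module.finrank Fq ↥(U ⊓ W) ≤ 1 :=
  stmt13_general q n N k hn Fq F hq hN V hkV a0 a1 ha0 ha1 ha0n ha1n hneq hP
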